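/- arXiv:2405.16784 — 5 statements merged into one kernel-verified Lean document; each statement's English description precedes it below -/
import Mathlib

section
/- Let n be a positive integer and F = GF(2^n). For a, b ∈ F with a, b, a+b all nonzero and a ≠ b, the number of x ∈ F satisfying Inv(x+a+b) + Inv(x+a) + Inv(x+b) + Inv(x) = 0 is 4 if a/b satisfies (a/b)^2 + (a/b) + 1 = 0, and 0 otherwise, where Inv(x) = x^(2^n - 2). -/
/-!
Since `0, a, b, a + b` are distinct, `q = 2 ^ n ≥ 4`, so `x ^ (q - 2) = x⁻¹` for every `x`,
including `0`.
The sum `S(x) = (x+a+b)⁻¹ + (x+a)⁻¹ + (x+b)⁻¹ + x⁻¹` is invariant under `x ↦ x + a` and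
`x ↦ x + b`, so on the subgroup `{0, a, b, a + b}` it is constant, equal to
`a⁻¹ + b⁻¹ + (a+b)⁻¹ = (a² + ab + b²) / (ab(a+b))`. Off that subgroup, clearing denominators gives
`S(x) · x(x+a)(x+b)(x+a+b) = ab(a+b) ≠ 0`. Hence the solutions are the four points of the
subgroup when `a² + ab + b² = 0`, i.e. `(a/b)² + a/b + 1 = 0`, and there are none otherwise.
-/

theorem FiniteField.pow_card_sub_two_eq_inv {K : Type*} [Field K] [Fintype K]
    (hK : 2 < Fintype.card K) (x : K) : x ^ (Fintype.card K - 2) = x⁻¹ := by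
  rcases eq_or_ne x 0 with rfl | hx
  · simp [zero_pow (Nat.sub_ne_zero_of_lt hK)]
  · refine eq_inv_of_mul_eq_one_left ?_
    rw [← pow_succ, show Fintype.card K - 2 + 1 = Fintype.card K - 1 by omega]
    exact FiniteField.pow_card_sub_one_eq_one x hx

theorem FiniteField.ringChar_eq_two_of_card_eq_two_pow {K : Type*} [Field K] [Fintype K] {n : ℕ}
    (hK : Fintype.card K = 2 ^ n) : ringChar K = 2 := by
  have hn : n ≠ 0 := by
    rintro rfl
    simpa [hK] using Fintype.one_lt_card (α := K)
  rw [FiniteField.even_card_iff_char_two, hK, Nat.pow_mod]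
  simp [hn]

theorem div_sq_add_div_add_one_eq_zero_iff {K : Type*} [Field K] {a b : K} (hb : b ≠ 0) :
    (a / b) ^ 2 + a / b + 1 = 0 ↔ a ^ 2 + a * b + b ^ 2 = 0 := by
  have : (a / b) ^ 2 + a / b + 1 = (a ^ 2 + a * b + b ^ 2) / b ^ 2 := by field_simp
  simp [this, hb]

section InvSecondDiff

variable {F : Type*} [Field F]

/-- The second-order derivative `D_a D_b Inv` at `x`: Lean's `0⁻¹ = 0` is exactly the paper's
convention `Inv(0) = 0`. -/
def invSecondDiff (a b x : F) : F := (x + a + b)⁻¹ + (x + a)⁻¹ + (x + b)⁻¹ + x⁻¹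

theorem invSecondDiff_comm (a b x : F) : invSecondDiff a b x = invSecondDiff b a x := by
  unfold invSecondDiff
  rw [add_right_comm x]
  ring

theorem invSecondDiff_zero (a b : F) : invSecondDiff a b 0 = (a + b)⁻¹ + a⁻¹ + b⁻¹ := by
  simp [invSecondDiff]

variable [CharP F 2]

open CharTwo

theorem invSecondDiff_periodic_left (a b : F) : Function.Periodic (invSecondDiff a b) a := by
  intro x
  simp only [invSecondDiff, CharTwo.add_cancel_right, add_right_comm _ a b]
  ring

theorem invSecondDiff_periodic_right (a b : F) : Function.Periodic (invSecondDiff a b) b := by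
  intro x
  rw [invSecondDiff_comm, invSecondDiff_periodic_left, invSecondDiff_comm]

theorem inv_add_add_inv_add_inv_eq_zero_iff {a b : F} (ha : a ≠ 0) (hb : b ≠ 0)
    (hab : a + b ≠ 0) : (a + b)⁻¹ + a⁻¹ + b⁻¹ = 0 ↔ a ^ 2 + a * b + b ^ 2 = 0 := by
  have : (a + b)⁻¹ + a⁻¹ + b⁻¹ = (a ^ 2 + a * b + b ^ 2) / (a * b * (a + b)) := by
    field_simp
    linear_combination (a * b) * two_eq_zero (R := F)
  simp [this, ha, hb, hab]

theorem invSecondDiff_mul_eq {a b x : F} (h₀ : x ≠ 0) (ha : x + a ≠ 0) (hb : x + b ≠ 0)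
    (hab : x + a + b ≠ 0) :
    invSecondDiff a b x * (x * (x + a) * (x + b) * (x + a + b)) = a * b * (a + b) := by
  unfold invSecondDiff
  field_simp
  linear_combination (2 * x ^ 3 + 3 * (a + b) * x ^ 2 + (a ^ 2 + 3 * a * b + b ^ 2) * x) *
    two_eq_zero (R := F)

variable [DecidableEq F]

theorem invSecondDiff_eq_of_mem {a b x : F} (hx : x ∈ ({0, a, b, a + b} : Finset F)) :
    invSecondDiff a b x = invSecondDiff a b 0 := by
  simp only [Finset.mem_insert, Finset.mem_singleton] at hx
  rcases hx with rfl | rfl | rfl | rfl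
  · rfl
  · simpa using invSecondDiff_periodic_left x b 0
  · simpa using invSecondDiff_periodic_right a x 0
  · rw [invSecondDiff_periodic_right]
    simpa using invSecondDiff_periodic_left a b 0

theorem invSecondDiff_eq_zero_iff {a b : F} (ha : a ≠ 0) (hb : b ≠ 0) (hab : a + b ≠ 0)
    (x : F) : invSecondDiff a b x = 0 ↔
      x ∈ ({0, a, b, a + b} : Finset F) ∧ a ^ 2 + a * b + b ^ 2 = 0 := by
  by_cases hx : x ∈ ({0, a, b, a + b} : Finset F)
  · rw [invSecondDiff_eq_of_mem hx, invSecondDiff_zero,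
      inv_add_add_inv_add_inv_eq_zero_iff ha hb hab, and_iff_right hx]
  · simp only [Finset.mem_insert, Finset.mem_singleton, not_or] at hx
    obtain ⟨h₀, hxa, hxb, hxab⟩ := hx
    have hprod := invSecondDiff_mul_eq h₀ (mt CharTwo.add_eq_zero.mp hxa)
      (mt CharTwo.add_eq_zero.mp hxb) (by rwa [add_assoc, Ne, CharTwo.add_eq_zero])
    simp only [Finset.mem_insert, Finset.mem_singleton, h₀, hxa, hxb, hxab, or_self,
      false_and, iff_false]
    intro h
    rw [h, zero_mul] at hprod
    exact mul_ne_zero (mul_ne_zero ha hb) hab hprod.symm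

theorem card_zero_pair_sum_eq_four {a b : F} (ha : a ≠ 0) (hb : b ≠ 0) (hab : a + b ≠ 0) :
    ({0, a, b, a + b} : Finset F).card = 4 := by
  have hne : a ≠ b := fun h => hab (CharTwo.add_eq_zero.mpr h)
  have hna : a ≠ a + b := fun h => hb (by simpa using h.symm)
  have hnb : b ≠ a + b := fun h => ha (by simpa using (add_eq_right.mp h.symm))
  simp [Finset.card_insert_of_notMem, ha.symm, hb.symm, hab.symm, hne, hna, hnb]

theorem card_filter_invSecondDiff_eq_zero [Fintype F] {a b : F} (ha : a ≠ 0)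
    (hb : b ≠ 0) (hab : a + b ≠ 0) :
    (Finset.univ.filter fun x => invSecondDiff a b x = 0).card =
      if a ^ 2 + a * b + b ^ 2 = 0 then 4 else 0 := by
  simp_rw [invSecondDiff_eq_zero_iff ha hb hab, Finset.filter_and, Finset.filter_mem_eq_inter,
    Finset.univ_inter]
  split_ifs with h
  · simpa [h] using card_zero_pair_sum_eq_four ha hb hab
  · simp [h]

end InvSecondDiff

theorem stmt_0_general {F : Type*} [Field F] [Fintype F] [DecidableEq F] {n : ℕ}
    (hF : Fintype.card F = 2 ^ n)
    (a b : F) (ha : a ≠ 0) (hb : b ≠ 0) (hab : a + b ≠ 0) :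
    (Finset.univ.filter fun x : F =>
      (x + a + b) ^ (2 ^ n - 2) + (x + a) ^ (2 ^ n - 2)
        + (x + b) ^ (2 ^ n - 2) + x ^ (2 ^ n - 2) = 0).card =
    if (a / b) ^ 2 + (a / b) + 1 = 0 then 4 else 0 := by
  have : CharP F 2 := ringChar.eq_iff.mp (FiniteField.ringChar_eq_two_of_card_eq_two_pow hF)
  have hcard : 2 < Fintype.card F := by
    have := Finset.card_le_univ ({0, a, b, a + b} : Finset F)
    rw [card_zero_pair_sum_eq_four ha hb hab] at this
    omega
  simp_rw [← hF, FiniteField.pow_card_sub_two_eq_inv hcard,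
    div_sq_add_div_add_one_eq_zero_iff hb]
  exact card_filter_invSecondDiff_eq_zero ha hb hab

theorem stmt_0 {F : Type*} [Field F] [Fintype F] [DecidableEq F] {n : ℕ}
    (hn : 0 < n) (hF : Fintype.card F = 2 ^ n)
    (a b : F) (ha : a ≠ 0) (hb : b ≠ 0) (hab : a + b ≠ 0) (hne : a ≠ b) :
    (Finset.univ.filter fun x : F =>
      (x + a + b) ^ (2 ^ n - 2) + (x + a) ^ (2 ^ n - 2)
        + (x + b) ^ (2 ^ n - 2) + x ^ (2 ^ n - 2) = 0).card =
    if (a / b) ^ 2 + (a / b) + 1 = 0 then 4 else 0 :=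
  stmt_0_general hF a b ha hb hab
end

section
/- Let F = GF(2^n) with n ≥ 2 and f = Inv ∘ (0,1), i.e., f(0) = 1, f(1) = 0, and f(x) = x^(2^n - 2) otherwise. Suppose a, b ∈ F satisfy ab(a+b) ≠ 0 and a ≠ b and a^3 + a + 1 = 0 = b^3 + b + 1. Then the equation f(x+a+b)+f(x+a)+f(x+b)+f(x) = 0 has exactly 8 solutions x ∈ F, namely 0, a, b, a+b, 1, a+1, b+1, a+b+1. -/
theorem stmt_6 {F : Type*} [Field F] [Fintype F] [DecidableEq F] {n : ℕ}
    (hn : 2 ≤ n) (hF : Fintype.card F = 2 ^ n)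
    (f : F → F)
    (hf : f = fun x => if x = 0 then 1 else if x = 1 then 0 else x ^ (2 ^ n - 2))
    (a b : F) (h : a * b * (a + b) ≠ 0) (hne : a ≠ b)
    (hA : a ^ 3 + a + 1 = 0) (hB : b ^ 3 + b + 1 = 0) :
    (Finset.univ.filter fun x : F =>
        f (x + a + b) + f (x + a) + f (x + b) + f x = 0) =
      ({0, a, b, a + b, 1, a + 1, b + 1, a + b + 1} : Finset F) ∧
    (Finset.univ.filter fun x : F =>
        f (x + a + b) + f (x + a) + f (x + b) + f x = 0).card = 8 := by
  have h2 : (2:F) = 0 := by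
    have := FiniteField.cast_card_eq_zero F
    rw [hF] at this; push_cast at this
    exact pow_eq_zero_iff (by omega) |>.mp this
  have zc : a + b ≠ 0 := fun hh => h (by rw [hh, mul_zero])
  have za : a ≠ 0 := fun hh => h (by rw [hh]; ring)
  have zb : b ≠ 0 := fun hh => h (by rw [hh]; ring)
  have z1 : (1:F) ≠ 0 := one_ne_zero
  have h1 : a^2 + a*b + b^2 = 1 := by
    have := mul_left_cancel₀ zc (show (a+b)*(a^2+a*b+b^2) = (a+b)*1 by
      linear_combination hA + hB + (a^2*b + a*b^2 - a - b - 1)*h2)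
    simpa using this
  have habc : a*b*(a+b) = 1 := by linear_combination a*h1 - hA + a*h2
  have hC : (a+b)^3 + (a+b) + 1 = 0 := by linear_combination hA + hB + 3*habc + h2
  -- f value lemmas
  have f0 : f 0 = 1 := by rw [hf]; simp
  have f1 : f 1 = 0 := by rw [hf]; simp
  have finv : ∀ t : F, t ≠ 0 → t ≠ 1 → f t = t⁻¹ := by
    intro t ht0 ht1
    rw [hf]; simp only [ht0, ht1, if_false]
    have hp : t ^ (2^n - 2) * t = 1 := by
      rw [← pow_succ]
      have h4 : 4 ≤ 2^n := by calc (4:ℕ) = 2^2 := rfl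
                                   _ ≤ 2^n := Nat.pow_le_pow_right (by norm_num) hn
      have he : 2^n - 2 + 1 = 2^n - 1 := by omega
      rw [he, ← hF]
      exact FiniteField.pow_card_sub_one_eq_one t ht0
    exact eq_inv_of_mul_eq_one_left (by linear_combination hp)
  have froot : ∀ t : F, t^3 + t + 1 = 0 → f t = t^2 + 1 := by
    intro t ht
    have ht0 : t ≠ 0 := fun hh => by rw [hh] at ht; simp at ht
    have ht1 : t ≠ 1 := fun hh => by
      rw [hh] at ht; exact one_ne_zero (show (1:F) = 0 by linear_combination ht - h2)
    rw [finv t ht0 ht1]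
    exact inv_eq_of_mul_eq_one_right (by linear_combination ht - h2)
  have froot1 : ∀ t : F, t^3 + t + 1 = 0 → f (t+1) = t^2 + t := by
    intro t ht
    have ht0 : t ≠ 0 := fun hh => by rw [hh] at ht; simp at ht
    have ht1 : t ≠ 1 := fun hh => by
      rw [hh] at ht; exact one_ne_zero (show (1:F) = 0 by linear_combination ht - h2)
    have h10 : t + 1 ≠ 0 := fun hh => ht1 (by linear_combination hh - h2)
    have h11 : t + 1 ≠ 1 := fun hh => ht0 (by linear_combination hh)
    rw [finv _ h10 h11]
    exact inv_eq_of_mul_eq_one_right (by linear_combination ht + (t^2-1)*h2)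
  -- nonzero facts for the "+1" elements
  have ha1 : a ≠ 1 := fun hh => by
    rw [hh] at hA; exact one_ne_zero (show (1:F) = 0 by linear_combination hA - h2)
  have hb1 : b ≠ 1 := fun hh => by
    rw [hh] at hB; exact one_ne_zero (show (1:F) = 0 by linear_combination hB - h2)
  have hc1 : a + b ≠ 1 := fun hh => by
    rw [hh] at hC; exact one_ne_zero (show (1:F) = 0 by linear_combination hC - h2)
  have za1 : a + 1 ≠ 0 := fun hh => ha1 (by linear_combination hh - h2)
  have zb1 : b + 1 ≠ 0 := fun hh => hb1 (by linear_combination hh - h2)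
  have zc1 : a + b + 1 ≠ 0 := fun hh => hc1 (by linear_combination hh - h2)
  -- set equality
  have hset : (Finset.univ.filter fun x : F =>
        f (x + a + b) + f (x + a) + f (x + b) + f x = 0) =
      ({0, a, b, a + b, 1, a + 1, b + 1, a + b + 1} : Finset F) := by
    ext x
    simp only [Finset.mem_filter, Finset.mem_univ, true_and, Finset.mem_insert,
      Finset.mem_singleton]
    constructor
    · intro hx
      by_contra hcon
      push_neg at hcon
      obtain ⟨e0, ea, eb, ec, e1, ea1, eb1, ec1⟩ := hcon
      have na0 : x + a ≠ 0 := fun hh => ea (by linear_combination hh - a*h2)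
      have na1 : x + a ≠ 1 := fun hh => ea1 (by linear_combination hh - a*h2)
      have nb0 : x + b ≠ 0 := fun hh => eb (by linear_combination hh - b*h2)
      have nb1 : x + b ≠ 1 := fun hh => eb1 (by linear_combination hh - b*h2)
      have nc0 : x + a + b ≠ 0 := fun hh => ec (by linear_combination hh - (a+b)*h2)
      have nc1 : x + a + b ≠ 1 := fun hh => ec1 (by linear_combination hh - (a+b)*h2)
      rw [finv _ nc0 nc1, finv _ na0 na1, finv _ nb0 nb1, finv _ e0 e1] at hx
      have key : (x * (x+a) * (x+b) * (x+a+b)) *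
          (x⁻¹ + (x+a)⁻¹ + (x+b)⁻¹ + (x+a+b)⁻¹) = 1 := by
        field_simp
        ring_nf
        linear_combination habc + (3*x*a*b + x*a^2 + x*b^2 + 3*x^2*a + 3*x^2*b + 2*x^3)*h2
      rw [show x⁻¹ + (x+a)⁻¹ + (x+b)⁻¹ + (x+a+b)⁻¹ =
          (x+a+b)⁻¹ + (x+a)⁻¹ + (x+b)⁻¹ + x⁻¹ by ring, hx, mul_zero] at key
      exact one_ne_zero key.symm
    · intro hx
      rcases hx with hx | hx | hx | hx | hx | hx | hx | hx <;> rw [hx]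
      · rw [show (0:F) + a + b = a + b by ring, show (0:F) + a = a by ring,
          show (0:F) + b = b by ring, froot _ hC, froot _ hA, froot _ hB, f0]
        linear_combination (a^2 + b^2 + a*b + 2)*h2
      · rw [show a + a + b = b by linear_combination a*h2,
          show a + a = (0:F) by linear_combination a*h2, froot _ hB, f0,
          froot _ hC, froot _ hA]
        linear_combination (a^2 + b^2 + a*b + 2)*h2
      · rw [show b + a + b = a by linear_combination b*h2,
          show b + a = a + b by ring,
          show b + b = (0:F) by linear_combination b*h2, froot _ hA, froot _ hC,
          f0, froot _ hB]
        linear_combination (a^2 + b^2 + a*b + 2)*h2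
      · rw [show a + b + a + b = (0:F) by linear_combination (a+b)*h2,
          show a + b + a = b by linear_combination a*h2,
          show a + b + b = a by linear_combination b*h2, f0, froot _ hB,
          froot _ hA, froot _ hC]
        linear_combination (a^2 + b^2 + a*b + 2)*h2
      · rw [show (1:F) + a + b = (a+b) + 1 by ring, show (1:F) + a = a + 1 by ring,
          show (1:F) + b = b + 1 by ring, froot1 _ hC, froot1 _ hA, froot1 _ hB, f1]
        linear_combination (a^2 + b^2 + a*b + a + b)*h2
      · rw [show a + 1 + a + b = b + 1 by linear_combination a*h2,
          show a + 1 + a = (1:F) by linear_combination a*h2,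
          show a + 1 + b = (a+b) + 1 by ring, froot1 _ hB, f1,
          froot1 _ hC, froot1 _ hA]
        linear_combination (a^2 + b^2 + a*b + a + b)*h2
      · rw [show b + 1 + a + b = a + 1 by linear_combination b*h2,
          show b + 1 + a = (a+b) + 1 by ring,
          show b + 1 + b = (1:F) by linear_combination b*h2, froot1 _ hA,
          froot1 _ hC, f1, froot1 _ hB]
        linear_combination (a^2 + b^2 + a*b + a + b)*h2
      · rw [show a + b + 1 + a + b = (1:F) by linear_combination (a+b)*h2,
          show a + b + 1 + a = b + 1 by linear_combination a*h2,
          show a + b + 1 + b = a + 1 by linear_combination b*h2, f1,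
          froot1 _ hB, froot1 _ hA, froot1 _ hC]
        linear_combination (a^2 + b^2 + a*b + a + b)*h2
  refine ⟨hset, ?_⟩
  rw [hset]
  have m0 : (0 : F) ∉ ({a, b, a + b, 1, a + 1, b + 1, a + b + 1} : Finset F) := by
    simp only [Finset.mem_insert, Finset.mem_singleton]; push_neg
    exact ⟨fun hh => za (by linear_combination -hh), fun hh => zb (by linear_combination -hh), fun hh => zc (by linear_combination -hh), fun hh => z1 (by linear_combination -hh), fun hh => za1 (by linear_combination -hh), fun hh => zb1 (by linear_combination -hh), fun hh => zc1 (by linear_combination -hh)⟩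
  have m1 : (a : F) ∉ ({b, a + b, 1, a + 1, b + 1, a + b + 1} : Finset F) := by
    simp only [Finset.mem_insert, Finset.mem_singleton]; push_neg
    exact ⟨fun hh => zc (by linear_combination -hh + (a)*h2), fun hh => zb (by linear_combination -hh), fun hh => za1 (by linear_combination -hh + (a)*h2), fun hh => z1 (by linear_combination -hh), fun hh => zc1 (by linear_combination -hh + (a)*h2), fun hh => zb1 (by linear_combination -hh)⟩
  have m2 : (b : F) ∉ ({a + b, 1, a + 1, b + 1, a + b + 1} : Finset F) := by
    simp only [Finset.mem_insert, Finset.mem_singleton]; push_neg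
    exact ⟨fun hh => za (by linear_combination -hh), fun hh => zb1 (by linear_combination -hh + (b)*h2), fun hh => zc1 (by linear_combination -hh + (b)*h2), fun hh => z1 (by linear_combination -hh), fun hh => za1 (by linear_combination -hh)⟩
  have m3 : (a + b : F) ∉ ({1, a + 1, b + 1, a + b + 1} : Finset F) := by
    simp only [Finset.mem_insert, Finset.mem_singleton]; push_neg
    exact ⟨fun hh => zc1 (by linear_combination -hh + (b + a)*h2), fun hh => zb1 (by linear_combination -hh + (b)*h2), fun hh => za1 (by linear_combination -hh + (a)*h2), fun hh => z1 (by linear_combination -hh)⟩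
  have m4 : (1 : F) ∉ ({a + 1, b + 1, a + b + 1} : Finset F) := by
    simp only [Finset.mem_insert, Finset.mem_singleton]; push_neg
    exact ⟨fun hh => za (by linear_combination -hh), fun hh => zb (by linear_combination -hh), fun hh => zc (by linear_combination -hh)⟩
  have m5 : (a + 1 : F) ∉ ({b + 1, a + b + 1} : Finset F) := by
    simp only [Finset.mem_insert, Finset.mem_singleton]; push_neg
    exact ⟨fun hh => zc (by linear_combination -hh + (a)*h2), fun hh => zb (by linear_combination -hh)⟩
  have m6 : (b + 1 : F) ∉ ({a + b + 1} : Finset F) := by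
    simp only [Finset.mem_insert, Finset.mem_singleton]; push_neg
    exact fun hh => za (by linear_combination -hh)
  rw [Finset.card_insert_of_notMem m0, Finset.card_insert_of_notMem m1,
    Finset.card_insert_of_notMem m2, Finset.card_insert_of_notMem m3,
    Finset.card_insert_of_notMem m4, Finset.card_insert_of_notMem m5,
    Finset.card_insert_of_notMem m6, Finset.card_singleton]
end

section
/- Let a, b be elements of GF(2^n), both nonzero, with a ≠ b, a+b ≠ 0, and suppose a^2·b + a·b^2 + a^2 + b^2 + a·b = 0 and a^2 + b^2 + a·b = 1 hold simultaneously. Then a^3 + a + 1 = 0 and b^3 + b + 1 = 0. -/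
/-!
In characteristic 2 the first equation is `a b (a + b) + (a² + b² + a b) = 0`, so the second gives
`a b (a + b) = 1`. Multiplying the second equation by `a` then yields
`a³ = a + a b (a + b) = a + 1`, and symmetrically for `b`.
-/

section CharTwo

variable {R : Type*} [CommRing R] [CharP R 2] {a b : R}

theorem CharTwo.mul_mul_add_eq_one (h1 : a ^ 2 * b + a * b ^ 2 + a ^ 2 + b ^ 2 + a * b = 0)
    (h2 : a ^ 2 + b ^ 2 + a * b = 1) : a * b * (a + b) = 1 := by
  linear_combination h1 - h2 - CharTwo.two_eq_zero (R := R)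

theorem CharTwo.pow_three_add_self_add_one_eq_zero (hab : a * b * (a + b) = 1)
    (h2 : a ^ 2 + b ^ 2 + a * b = 1) : a ^ 3 + a + 1 = 0 := by
  linear_combination a * h2 - hab + a * CharTwo.two_eq_zero (R := R)

end CharTwo

theorem stmt_7_general {F : Type*} [Field F] [Fintype F] {n : ℕ}
    (hF : Fintype.card F = 2 ^ n)
    (a b : F)
    (h1 : a ^ 2 * b + a * b ^ 2 + a ^ 2 + b ^ 2 + a * b = 0)
    (h2 : a ^ 2 + b ^ 2 + a * b = 1) :
    a ^ 3 + a + 1 = 0 ∧ b ^ 3 + b + 1 = 0 := by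
  have : CharP F 2 := charP_of_card_eq_prime_pow hF
  have hab : a * b * (a + b) = 1 := CharTwo.mul_mul_add_eq_one h1 h2
  exact ⟨CharTwo.pow_three_add_self_add_one_eq_zero hab h2,
    CharTwo.pow_three_add_self_add_one_eq_zero (b := a) (by linear_combination hab)
      (by linear_combination h2)⟩

theorem stmt_7 {F : Type*} [Field F] [Fintype F] {n : ℕ}
    (hn : 0 < n) (hF : Fintype.card F = 2 ^ n)
    (a b : F) (ha : a ≠ 0) (hb : b ≠ 0) (hne : a ≠ b) (hab : a + b ≠ 0)
    (h1 : a ^ 2 * b + a * b ^ 2 + a ^ 2 + b ^ 2 + a * b = 0)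
    (h2 : a ^ 2 + b ^ 2 + a * b = 1) :
    a ^ 3 + a + 1 = 0 ∧ b ^ 3 + b + 1 = 0 :=
  stmt_7_general hF a b h1 h2
end

section
/- Let F = GF(2^n) and let f = Inv ∘ (0,1) (the inverse function with values at 0 and 1 swapped). The number of pairs (a,b) ∈ F* × F*, a ≠ b, satisfying a^2·b + a·b^2 + a^2 + b^2 + a·b = 0 equals 2^n - 2 if n is odd and 2^n - 4 if n is even. -/
/-!
In characteristic 2, writing `b = a x` turns the cubic into `a² (a (x² + x) + x² + x + 1)`, so
the solutions with `a, b ≠ 0`, `a ≠ b` correspond bijectively to the ratios `x = b / a` with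
`x ∉ {0, 1}` and `x² + x + 1 ≠ 0`, via `a = (x² + x + 1) / (x² + x)`. The roots of
`x² + x + 1 = Φ₃` are the primitive cube roots of unity; in `GF(2ⁿ)` there are two of them when
`3 ∣ 2ⁿ - 1`, i.e. when `n` is even, and none otherwise.
-/

open Finset Polynomial

namespace FiniteField

variable {K : Type*} [Field K] [Fintype K]

theorem exists_isPrimitiveRoot_iff {k : ℕ} (hk : 0 < k) :
    (∃ ζ : K, IsPrimitiveRoot ζ k) ↔ k ∣ Fintype.card K - 1 := by
  constructor
  · rintro ⟨ζ, hζ⟩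
    exact (hζ.pow_eq_one_iff_dvd _).mp (pow_card_sub_one_eq_one ζ (hζ.ne_zero hk.ne'))
  · intro hdvd
    classical
    rw [← Fintype.card_units] at hdvd
    obtain ⟨u, hu⟩ : ({u : Kˣ | orderOf u = k} : Finset Kˣ).Nonempty := by
      rw [← card_pos, IsCyclic.card_orderOf_eq_totient hdvd]
      exact Nat.totient_pos.mpr hk
    refine ⟨u, IsPrimitiveRoot.coe_units_iff.mpr ?_⟩
    rw [← (mem_filter_univ u).mp hu]
    exact IsPrimitiveRoot.orderOf u

theorem card_primitiveRoots {k : ℕ} (hk : 0 < k) :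
    #(primitiveRoots k K) = if k ∣ Fintype.card K - 1 then k.totient else 0 := by
  split_ifs with hdvd
  · obtain ⟨ζ, hζ⟩ := (exists_isPrimitiveRoot_iff hk).mpr hdvd
    exact hζ.card_primitiveRoots
  · rw [card_eq_zero, eq_empty_iff_forall_notMem]
    intro ζ hζ
    exact hdvd ((exists_isPrimitiveRoot_iff hk).mp ⟨ζ, (mem_primitiveRoots hk).mp hζ⟩)

end FiniteField

theorem Nat.three_dvd_two_pow_sub_one_iff {n : ℕ} : 3 ∣ 2 ^ n - 1 ↔ Even n := by
  rw [← ZMod.natCast_eq_zero_iff, Nat.cast_sub Nat.one_le_two_pow, sub_eq_zero]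
  push_cast
  rw [show (2 : ZMod 3) = -1 by decide, neg_one_pow_eq_one_iff_even (by decide)]

theorem isPrimitiveRoot_three_iff {F : Type*} [Field F] [NeZero (3 : F)] {x : F} :
    IsPrimitiveRoot x 3 ↔ x ^ 2 + x + 1 = 0 := by
  rw [← isRoot_cyclotomic_iff, cyclotomic_three]
  simp

namespace CharTwo

variable {F : Type*} [Field F] [CharP F 2]

theorem sq_add_self_ne_zero {x : F} (h0 : x ≠ 0) (h1 : x ≠ 1) : x ^ 2 + x ≠ 0 := by
  rw [sq, ← mul_add_one]
  exact mul_ne_zero h0 fun h => h1 (CharTwo.add_eq_zero.mp h)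

theorem cubic_eq_zero_iff {a x : F} (ha : a ≠ 0) (h0 : x ≠ 0) (h1 : x ≠ 1) :
    a ^ 2 * (a * x) + a * (a * x) ^ 2 + a ^ 2 + (a * x) ^ 2 + a * (a * x) = 0 ↔
      a = (x ^ 2 + x + 1) / (x ^ 2 + x) := by
  rw [show a ^ 2 * (a * x) + a * (a * x) ^ 2 + a ^ 2 + (a * x) ^ 2 + a * (a * x) =
      a ^ 2 * (a * (x ^ 2 + x) + (x ^ 2 + x + 1)) by ring,
    mul_eq_zero, or_iff_right (pow_ne_zero 2 ha), CharTwo.add_eq_zero,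
    eq_div_iff (sq_add_self_ne_zero h0 h1)]

theorem card_cubic_solutions_eq [Fintype F] [DecidableEq F] :
    #{q : F × F | q.1 ≠ 0 ∧ q.2 ≠ 0 ∧ q.1 ≠ q.2 ∧
        q.1 ^ 2 * q.2 + q.1 * q.2 ^ 2 + q.1 ^ 2 + q.2 ^ 2 + q.1 * q.2 = 0} =
      #{x : F | x ≠ 0 ∧ x ≠ 1 ∧ x ^ 2 + x + 1 ≠ 0} := by
  set c : F → F := fun x => (x ^ 2 + x + 1) / (x ^ 2 + x)
  have hc {x : F} (h0 : x ≠ 0) (h1 : x ≠ 1) : c x ≠ 0 ↔ x ^ 2 + x + 1 ≠ 0 :=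
    div_ne_zero_iff.trans (and_iff_left (sq_add_self_ne_zero h0 h1))
  have ratio {a b : F} (ha : a ≠ 0) (hb : b ≠ 0) (hab : a ≠ b) :
      ∃ x, x ≠ 0 ∧ x ≠ 1 ∧ b = a * x :=
    ⟨b / a, div_ne_zero hb ha, fun h => hab ((div_eq_one_iff_eq ha).mp h).symm,
      (mul_div_cancel₀ b ha).symm⟩
  refine card_nbij' (fun q => q.2 / q.1) (fun x => (c x, c x * x)) ?_ ?_ ?_ ?_
  · rintro ⟨a, b⟩ hq
    simp only [coe_filter, mem_univ, true_and, Set.mem_ofPred_eq] at hq ⊢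
    obtain ⟨ha, hb, hab, hcubic⟩ := hq
    obtain ⟨x, h0, h1, rfl⟩ := ratio ha hb hab
    have hcx : c x = a := ((cubic_eq_zero_iff ha h0 h1).mp hcubic).symm
    rw [mul_div_cancel_left₀ x ha, ← hc h0 h1, hcx]
    exact ⟨h0, h1, ha⟩
  · intro x hx
    simp only [coe_filter, mem_univ, true_and, Set.mem_ofPred_eq] at hx ⊢
    obtain ⟨h0, h1, hx⟩ := hx
    have ha := (hc h0 h1).mpr hx
    refine ⟨ha, mul_ne_zero ha h0, fun h => h1 ?_, (cubic_eq_zero_iff ha h0 h1).mpr rfl⟩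
    exact (mul_right_eq_self₀.mp h.symm).resolve_right ha
  · rintro ⟨a, b⟩ hq
    simp only [coe_filter, mem_univ, true_and, Set.mem_ofPred_eq] at hq
    obtain ⟨ha, hb, hab, hcubic⟩ := hq
    obtain ⟨x, h0, h1, rfl⟩ := ratio ha hb hab
    have hcx : c x = a := ((cubic_eq_zero_iff ha h0 h1).mp hcubic).symm
    simp only [mul_div_cancel_left₀ x ha, hcx]
  · intro x hx
    simp only [coe_filter, mem_univ, true_and, Set.mem_ofPred_eq] at hx
    exact mul_div_cancel_left₀ x ((hc hx.1 hx.2.1).mpr hx.2.2)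

instance neZero_three : NeZero (3 : F) :=
  ⟨fun h => absurd ((CharP.cast_eq_zero_iff F 2 3).mp (by exact_mod_cast h)) (by decide)⟩

theorem card_filter_sq_add_self_add_one_ne_zero [Fintype F] [DecidableEq F] :
    #{x : F | x ≠ 0 ∧ x ≠ 1 ∧ x ^ 2 + x + 1 ≠ 0} =
      Fintype.card F - 2 - #(primitiveRoots 3 F) := by
  have hsub : primitiveRoots 3 F ⊆ univ \ {0, 1} := by
    intro x hx
    have hx := (mem_primitiveRoots three_pos).mp hx
    simp only [mem_sdiff, mem_univ, mem_insert, mem_singleton, true_and, not_or]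
    exact ⟨hx.ne_zero three_ne_zero, fun h => by simp [h] at hx⟩
  have : ({x : F | x ≠ 0 ∧ x ≠ 1 ∧ x ^ 2 + x + 1 ≠ 0} : Finset F) =
      (univ \ {0, 1}) \ primitiveRoots 3 F := by
    ext x
    simp [mem_primitiveRoots three_pos, isPrimitiveRoot_three_iff, and_assoc]
  rw [this, card_sdiff_of_subset hsub, card_sdiff_of_subset (subset_univ _), card_univ,
    card_pair zero_ne_one]

end CharTwo

theorem stmt_9 {F : Type*} [Field F] [Fintype F] [DecidableEq F] {n : ℕ}
    (hn : 0 < n) (hF : Fintype.card F = 2 ^ n) :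
    (Finset.univ.filter fun q : F × F =>
      q.1 ≠ 0 ∧ q.2 ≠ 0 ∧ q.1 ≠ q.2 ∧
        q.1 ^ 2 * q.2 + q.1 * q.2 ^ 2 + q.1 ^ 2 + q.2 ^ 2 + q.1 * q.2 = 0).card =
    if Odd n then 2 ^ n - 2 else 2 ^ n - 4 := by
  have two_pow_eq_zero : (2 : F) ^ n = 0 := by
    have := FiniteField.cast_card_eq_zero F
    rwa [hF, Nat.cast_pow, Nat.cast_ofNat] at this
  have : CharP F 2 := CharTwo.of_one_ne_zero_of_two_eq_zero one_ne_zero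
    ((pow_eq_zero_iff hn.ne').mp two_pow_eq_zero)
  rw [CharTwo.card_cubic_solutions_eq, CharTwo.card_filter_sq_add_self_add_one_ne_zero,
    FiniteField.card_primitiveRoots three_pos, hF]
  simp only [Nat.three_dvd_two_pow_sub_one_iff, Nat.totient_prime Nat.prime_three,
    ← Nat.not_even_iff_odd]
  split_ifs <;> omega
end

section
/- Let F = GF(2^n), γ ∈ F \ {0,1}, and f = Inv ∘ (1,γ): f(1) = Inv(γ), f(γ) = Inv(1) = 1, f(x) = x^(2^n-2) otherwise. Suppose a, b ∈ F with ab(a+b) ≠ 0 and {a, b, a+b} ∩ {1, γ} = ∅. If x ∉ {0, a, b, a+b, 1, a+1, b+1, a+b+1, γ, a+γ, b+γ, a+b+γ}, then x is not a solution of f(x+a+b)+f(x+a)+f(x+b)+f(x) = 0. -/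
theorem stmt_15 {F : Type*} [Field F] [Fintype F] [DecidableEq F] {n : ℕ}
    (hn : 0 < n) (hF : Fintype.card F = 2 ^ n)
    (γ : F) (hγ0 : γ ≠ 0) (hγ1 : γ ≠ 1)
    (f : F → F)
    (hf : f = fun x => if x = 1 then γ ^ (2 ^ n - 2)
                        else if x = γ then 1 else x ^ (2 ^ n - 2))
    (a b : F) (h : a * b * (a + b) ≠ 0)
    (h1 : a ≠ 1) (h2 : b ≠ 1) (h3 : a + b ≠ 1)
    (h4 : a ≠ γ) (h5 : b ≠ γ) (h6 : a + b ≠ γ)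
    (x : F)
    (hx : x ∉ ({0, a, b, a + b, 1, a + 1, b + 1, a + b + 1,
                 γ, a + γ, b + γ, a + b + γ} : Set F)) :
    f (x + a + b) + f (x + a) + f (x + b) + f x ≠ 0 := by
  simp only [Set.mem_insert_iff, Set.mem_singleton_iff, not_or] at hx
  obtain ⟨hx0, hxa, hxb, hxab, hx1, hxa1, hxb1, hxab1, hxγ, hxaγ, hxbγ, hxabγ⟩ := hx
  -- characteristic 2
  have hp : (Fintype.card F).Prime ∨ ∃ p k, Nat.Prime p ∧ 0 < k ∧ Fintype.card F = p ^ k :=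
    Or.inr ⟨2, n, Nat.prime_two, hn, hF⟩
  obtain ⟨p, hpi⟩ := CharP.exists F
  haveI := hpi
  have hpp : p.Prime := CharP.char_is_prime F p
  have hpd : p ∣ Fintype.card F := by
    exact (CharP.cast_eq_zero_iff F p _).mp (Nat.cast_card_eq_zero F)
  rw [hF] at hpd
  have hp2 : p = 2 := (Nat.prime_dvd_prime_iff_eq hpp Nat.prime_two).mp
    (hpp.dvd_of_dvd_pow hpd)
  subst hp2
  haveI : CharP F 2 := hpi
  have two0 : (2 : F) = 0 := by exact_mod_cast CharP.cast_eq_zero F 2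
  -- nonzero-ness of the four arguments
  have ha0 : a ≠ 0 := by rintro rfl; exact h (by ring_nf)
  have hb0 : b ≠ 0 := by rintro rfl; exact h (by ring_nf)
  have hab0 : a + b ≠ 0 := fun hc => h (by rw [hc]; ring)
  have hxne : x ≠ 0 := hx0
  have hxa0 : x + a ≠ 0 := by
    intro hc; exact hxa (by linear_combination hc - a * two0)
  have hxb0 : x + b ≠ 0 := by
    intro hc; exact hxb (by linear_combination hc - b * two0)
  have hxab0 : x + a + b ≠ 0 := by
    intro hc; exact hxab (by linear_combination hc - (a + b) * two0)
  -- f equals inverse on the arguments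
  have key : ∀ y : F, y ≠ 0 → y ≠ 1 → y ≠ γ → f y = y⁻¹ := by
    intro y hy0 hy1 hyγ
    rw [hf]
    simp only [if_neg hy1, if_neg hyγ]
    have hq1 : y ^ (2 ^ n - 1) = 1 := by
      rw [← hF]; exact FiniteField.pow_card_sub_one_eq_one y hy0
    have h2n : 2 ≤ 2 ^ n := by
      calc 2 = 2 ^ 1 := rfl
      _ ≤ 2 ^ n := Nat.pow_le_pow_right (by norm_num) hn
    have : y ^ (2 ^ n - 2) * y = 1 := by
      rw [← pow_succ]
      have : 2 ^ n - 2 + 1 = 2 ^ n - 1 := by omega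
      rw [this, hq1]
    exact (inv_eq_of_mul_eq_one_right (by rw [mul_comm]; exact this)).symm
  have e1 : f x = x⁻¹ := key x hxne hx1 hxγ
  have e2 : f (x + a) = (x + a)⁻¹ := by
    apply key _ hxa0
    · intro hc; apply hxa1; linear_combination hc - a * two0
    · intro hc; apply hxaγ; linear_combination hc - a * two0
  have e3 : f (x + b) = (x + b)⁻¹ := by
    apply key _ hxb0
    · intro hc; apply hxb1; linear_combination hc - b * two0
    · intro hc; apply hxbγ; linear_combination hc - b * two0
  have e4 : f (x + a + b) = (x + a + b)⁻¹ := by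
    apply key _ hxab0
    · intro hc; apply hxab1; linear_combination hc - (a + b) * two0
    · intro hc; apply hxabγ; linear_combination hc - (a + b) * two0
  rw [e1, e2, e3, e4]
  intro hc
  apply h
  field_simp at hc
  linear_combination hc - (2*x^3 + 3*(a+b)*x^2 + (a^2+3*a*b+b^2)*x) * two0
end
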